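/- For every generalized composition α̃, the leading monomial of G_α̃ with respect to the order ≤_lex is X^α̃ = x₁^{α̃₁}x₂^{α̃₂}⋯, with leading coefficient 1. -/

import Mathlib

/-!
The coefficient of `x^e` in `F_ν` is `1` exactly when `e` refines `ν` (`Refines e (expOf ν)`:
equal degree, and every partial sum of `ν` is a partial sum of `e`), and `0` otherwise.
Induction along the defining recursion `G_{γ·0·a·β} = G_{γ·a·β} - x_{ℓ(γ)+1} G_{γ·(a-1)·β}`
then gives:

* `G_α̃` is homogeneous of degree `|α̃|`;
* if `e` vanishes wherever `α̃` has a zero part, the second term never contributes, and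
  deleting zero parts does not change the partial sums, so the coefficient of `x^e` is still
  `[e refines α̃]`; for `e = α̃` it is `1`;
* if `e` agrees with `α̃` before position `i` and `e_i > α̃_i`, the coefficient is `0`. The
  essential case is `i = ℓ(γ)`, where the coefficient of `x^e` in `G_{γ·a·β}` equals that of
  `x^e / x_{i+1}` in `G_{γ·(a-1)·β}` (lowering `e_i` and `a` together preserves refinement),
  so the two terms of the recursion cancel.

A monomial `x^e ≠ X^α̃` with nonzero coefficient therefore has the degree of `X^α̃` and is
smaller at the first position where they differ.
-/

/-- Descent set of a composition (list of positive parts): partial sums. -/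
def descents (l : List ℕ) : Finset ℕ :=
  (Finset.Ioo 0 l.length).image (fun k => (l.take k).sum)

/-- The fundamental quasi-symmetric function of degree `d` with descent set `D`
(variable `xᵢ` is `X (i-1)`). -/
noncomputable def Fqs (d : ℕ) (D : Finset ℕ) : MvPowerSeries ℕ ℚ :=
  fun e => (Nat.card {j : Fin d → ℕ // Monotone j ∧
    (∀ a b : Fin d, (a : ℕ) + 1 = (b : ℕ) → (a : ℕ) + 1 ∈ D → j a < j b) ∧
    ∀ s : ℕ, e s = (Finset.univ.filter fun i => j i = s).card} : ℚ)

/-- Strip the trailing zeros of a generalized composition (finite list of parts). -/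
def strip (l : List ℕ) : List ℕ := (l.reverse.dropWhile (· == 0)).reverse

/-- Fuel-driven version of the recursive definition of `G`.  After stripping trailing
zeros: if the result `ν` is a standard composition, `G = F_ν`; otherwise write
`ν = γ ++ [0] ++ τ` where `τ = a :: β` is the maximal zero-free (standard) suffix, and
`G_{γ·0·a·β} = G_{γ·a·β} - x_{ℓ(γ)+1} · G_{γ·(a-1)·β}` (note `x_{k}` is `X (k-1)`).
The fuel (an upper bound for the stripped length, which strictly decreases) makes the
recursion structural. -/
noncomputable def Gaux : ℕ → List ℕ → MvPowerSeries ℕ ℚ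
  | 0, l => Fqs (strip l).sum (descents (strip l))
  | (fuel + 1), l =>
      let l' := strip l
      if 0 ∈ l' then
        let r := l'.reverse
        let τ := (r.takeWhile (· != 0)).reverse
        let γ := ((r.dropWhile (· != 0)).tail).reverse
        Gaux fuel (γ ++ τ) -
          MvPowerSeries.X γ.length * Gaux fuel (γ ++ (τ.headI - 1) :: τ.tail)
      else Fqs l'.sum (descents l')

/-- The function `G_{α̃}` of a generalized composition `α̃` (finite list of parts,
extended by zeros), defined recursively from fundamental quasi-symmetric functions:
`G_{0,0,…} = 1`; `G_{ν·0·0⋯} = F_ν` for `ν` standard; and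
`G_{γ̃·0·a·β·0⋯} = G_{γ̃·a·β·0⋯} - x_{ℓ(γ̃)+1}·G_{γ̃·(a-1)·β·0⋯}` for `a > 0`, `β`
standard. -/
noncomputable def G (l : List ℕ) : MvPowerSeries ℕ ℚ := Gaux (strip l).length l

/-- Total degree of an exponent sequence `α : ℕ →₀ ℕ`. -/
def degOf (α : ℕ →₀ ℕ) : ℕ := ∑ i ∈ α.support, α i

/-- The monomial order `≤_lex`: smaller degree is larger, and within a degree
lexicographically larger is larger. -/
def lexLE (α β : ℕ →₀ ℕ) : Prop :=
  degOf β < degOf α ∨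
    (degOf α = degOf β ∧ (α = β ∨ ∃ i, α i < β i ∧ ∀ j, j < i → α j = β j))

/-- The exponent sequence of the monomial `X^{α̃} = x₁^{α̃₁}x₂^{α̃₂}⋯` attached to a
generalized composition given as a list. -/
noncomputable def expOf (l : List ℕ) : ℕ →₀ ℕ :=
  Finsupp.onFinset (Finset.range l.length) (fun i => l.getD i 0)
    (fun i hi => Finset.mem_range.mpr (not_le.mp fun h => hi (List.getD_eq_default _ _ h)))

open Finset

def partialSum (e : ℕ →₀ ℕ) (v : ℕ) : ℕ := ∑ s ∈ range v, e s

def Refines (e f : ℕ →₀ ℕ) : Prop :=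
  degOf e = degOf f ∧ Set.range (partialSum f) ⊆ Set.range (partialSum e)

section PartialSum

variable {e f : ℕ →₀ ℕ}

lemma partialSum_succ (e : ℕ →₀ ℕ) (v : ℕ) : partialSum e (v + 1) = partialSum e v + e v :=
  sum_range_succ _ _

lemma partialSum_mono (e : ℕ →₀ ℕ) : Monotone (partialSum e) := fun _ _ h =>
  sum_le_sum_of_subset (range_subset_range.2 h)

lemma partialSum_congr {v : ℕ} (h : ∀ j < v, e j = f j) : partialSum e v = partialSum f v :=
  sum_congr rfl fun j hj => h j (mem_range.1 hj)

lemma partialSum_le_degOf (e : ℕ →₀ ℕ) (v : ℕ) : partialSum e v ≤ degOf e :=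
  sum_le_sum_of_ne_zero fun _ _ hs => Finsupp.mem_support_iff.2 hs

lemma exists_partialSum_eq_degOf (e : ℕ →₀ ℕ) : ∃ N, ∀ v ≥ N, partialSum e v = degOf e := by
  refine ⟨e.support.sup id + 1, fun v hv => (sum_subset (fun s hs => ?_) fun s _ hs => ?_).symm⟩
  · have : s ≤ e.support.sup id := le_sup (f := id) hs
    exact mem_range.2 (by omega)
  · exact Finsupp.notMem_support_iff.1 hs

lemma sub_single_apply_of_lt {p j : ℕ} (h : j < p) :
    (e - Finsupp.single p 1 : ℕ →₀ ℕ) j = e j := by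
  simp [Finsupp.single_eq_of_ne h.ne]

lemma partialSum_sub_single_of_le {p v : ℕ} (h : v ≤ p) :
    partialSum (e - Finsupp.single p 1) v = partialSum e v :=
  partialSum_congr fun _ hj => sub_single_apply_of_lt (by omega)

lemma partialSum_sub_single_of_lt {p v : ℕ} (he : 1 ≤ e p) (h : p < v) :
    partialSum (e - Finsupp.single p 1) v + 1 = partialSum e v := by
  conv_rhs => rw [← tsub_add_cancel_of_le (Finsupp.single_le_iff.2 he)]
  simp only [partialSum, Finsupp.add_apply, sum_add_distrib, Finsupp.single_apply,
    sum_ite_eq, mem_range, if_pos h]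

lemma degOf_sub_single {p : ℕ} (he : 1 ≤ e p) :
    degOf (e - Finsupp.single p 1) + 1 = degOf e := by
  have h := map_add Finsupp.degree (e - Finsupp.single p 1) (Finsupp.single p 1)
  rwa [tsub_add_cancel_of_le (Finsupp.single_le_iff.2 he), Finsupp.degree_single, eq_comm] at h

end PartialSum

lemma refines_sub_single_iff {e f : ℕ →₀ ℕ} {p : ℕ} (hagree : ∀ j < p, e j = f j)
    (he : 1 ≤ e p) (hf : 1 ≤ f p) (hjump : 2 ≤ f p ∨ e p = 1) :
    Refines (e - Finsupp.single p 1) (f - Finsupp.single p 1) ↔ Refines e f := by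
  rw [Refines, Refines, ← degOf_sub_single he, ← degOf_sub_single hf, Nat.add_right_cancel_iff]
  refine and_congr_right fun _ => ?_
  set e' := e - Finsupp.single p 1
  set f' := f - Finsupp.single p 1
  have hsame : ∀ v ≤ p, partialSum e v = partialSum f v := fun v hv =>
    partialSum_congr fun j hj => hagree j (by omega)
  have hle : ∀ v ≤ p, partialSum e' v = partialSum e v ∧ partialSum f' v = partialSum f v :=
    fun v hv => ⟨partialSum_sub_single_of_le hv, partialSum_sub_single_of_le hv⟩
  have hgt : ∀ v, p < v →
      partialSum e' v + 1 = partialSum e v ∧ partialSum f' v + 1 = partialSum f v :=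
    fun v hv => ⟨partialSum_sub_single_of_lt he hv, partialSum_sub_single_of_lt hf hv⟩
  have hep := partialSum_succ e p
  have hfp := partialSum_succ f p
  have hp := hsame p le_rfl
  constructor
  · rintro hsub _ ⟨k, rfl⟩
    by_cases hk : k ≤ p
    · exact ⟨k, hsame k hk⟩
    obtain ⟨v, hv⟩ := hsub ⟨k, rfl⟩
    have hk' := hgt k (by omega)
    by_cases hv' : p < v
    · exact ⟨v, by have := hgt v hv'; omega⟩
    -- the partial sum of `f'` at `k` then sits at the jump `p`, which forces `e p = 1`
    have := partialSum_mono e (show v ≤ p by omega)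
    have := partialSum_mono f' (show p + 1 ≤ k by omega)
    have := hgt (p + 1) (by omega)
    have := hle p le_rfl
    have := hle v (by omega)
    exact ⟨p + 1, by omega⟩
  · rintro hsub _ ⟨k, rfl⟩
    by_cases hk : k ≤ p
    · exact ⟨k, by rw [(hle k hk).1, (hle k hk).2, hsame k hk]⟩
    obtain ⟨v, hv⟩ := hsub ⟨k, rfl⟩
    have hk' := hgt k (by omega)
    by_cases hv' : p < v
    · exact ⟨v, by have := hgt v hv'; omega⟩
    have := partialSum_mono e (show v ≤ p by omega)
    have := partialSum_mono f (show p + 1 ≤ k by omega)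
    omega

section Fqs

variable {d : ℕ} {e : ℕ →₀ ℕ} {j : Fin d → ℕ}

lemma card_filter_val_lt {n : ℕ} (h : n ≤ d) :
    (univ.filter fun q : Fin d => (q : ℕ) < n).card = n := by
  have : (univ.filter fun q : Fin d => (q : ℕ) < n) =
      (range n).attachFin fun m hm => (mem_range.1 hm).trans_le h := by
    ext q
    simp [mem_attachFin]
  rw [this, card_attachFin, card_range]

lemma card_filter_lt_eq_partialSum (hfib : ∀ s, e s = (univ.filter fun i => j i = s).card)
    (v : ℕ) : (univ.filter fun q => j q < v).card = partialSum e v := by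
  rw [partialSum, card_eq_sum_card_fiberwise (f := j) (t := range v)
    fun q hq => mem_range.2 (mem_filter.1 hq).2]
  refine sum_congr rfl fun s hs => ?_
  rw [hfib s, filter_filter]
  congr 1
  ext q
  simp only [mem_filter, mem_univ, true_and, and_iff_right_iff_imp]
  rintro rfl
  exact mem_range.1 hs

lemma lt_iff_lt_partialSum_of_fiber_card (hmono : Monotone j)
    (hfib : ∀ s, e s = (univ.filter fun i => j i = s).card) (v : ℕ) (q : Fin d) :
    j q < v ↔ (q : ℕ) < partialSum e v := by
  rw [← card_filter_lt_eq_partialSum hfib v]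
  constructor
  · intro hq
    have hsub : Iic q ⊆ univ.filter fun q' => j q' < v := fun q' hq' =>
      mem_filter.2 ⟨mem_univ _, (hmono (mem_Iic.1 hq')).trans_lt hq⟩
    have := card_le_card hsub
    rw [Fin.card_Iic] at this
    omega
  · intro hq
    by_contra hv
    have hsub : (univ.filter fun q' => j q' < v) ⊆ Iio q := fun q' hq' =>
      mem_Iio.2 (lt_of_not_ge fun h => hv ((hmono h).trans_lt (mem_filter.1 hq').2))
    have := card_le_card hsub
    rw [Fin.card_Iio] at this
    omega

lemma eq_of_monotone_of_fiber_card {j' : Fin d → ℕ} (hmono : Monotone j) (hmono' : Monotone j')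
    (hfib : ∀ s, e s = (univ.filter fun i => j i = s).card)
    (hfib' : ∀ s, e s = (univ.filter fun i => j' i = s).card) : j = j' := by
  funext q
  have h := fun v => (lt_iff_lt_partialSum_of_fiber_card hmono hfib v q).trans
    (lt_iff_lt_partialSum_of_fiber_card hmono' hfib' v q).symm
  have := h (j q + 1)
  have := h (j' q + 1)
  omega

lemma degOf_eq_of_fiber_card (hfib : ∀ s, e s = (univ.filter fun i => j i = s).card) :
    degOf e = d := by
  obtain ⟨N, hN⟩ := exists_partialSum_eq_degOf e
  have hall : (univ.filter fun q => j q < max N (univ.sup j + 1)) = univ :=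
    filter_true_of_mem fun q _ =>
      (Nat.lt_succ_of_le (le_sup (mem_univ q))).trans_le (le_max_right _ _)
  rw [← hN _ (le_max_left N (univ.sup j + 1)), ← card_filter_lt_eq_partialSum hfib, hall,
    card_univ, Fintype.card_fin]

lemma mem_range_partialSum_of_fiber_card (hmono : Monotone j)
    (hfib : ∀ s, e s = (univ.filter fun i => j i = s).card) {a b : Fin d}
    (hab : (a : ℕ) + 1 = b) (hlt : j a < j b) : (b : ℕ) ∈ Set.range (partialSum e) := by
  have ha := (lt_iff_lt_partialSum_of_fiber_card hmono hfib (j b) a).1 hlt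
  have hb := (lt_iff_lt_partialSum_of_fiber_card hmono hfib (j b) b).not.1 (lt_irrefl _)
  exact ⟨j b, by omega⟩

lemma exists_lt_partialSum_succ (hd : degOf e = d) (q : Fin d) :
    ∃ v, (q : ℕ) < partialSum e (v + 1) := by
  obtain ⟨N, hN⟩ := exists_partialSum_eq_degOf e
  exact ⟨N, by rw [hN _ (Nat.le_succ N), hd]; exact q.isLt⟩

/-- The only filling of a fundamental quasisymmetric function with content `e`:
`q` goes to the part of `e` that contains it. -/
noncomputable def blockIndex (hd : degOf e = d) (q : Fin d) : ℕ :=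
  Nat.find (exists_lt_partialSum_succ hd q)

lemma blockIndex_lt_iff (hd : degOf e = d) (q : Fin d) (v : ℕ) :
    blockIndex hd q < v ↔ (q : ℕ) < partialSum e v := by
  rw [blockIndex, Nat.find_lt_iff]
  constructor
  · rintro ⟨m, hm, hq⟩
    exact hq.trans_le (partialSum_mono e hm)
  · intro hq
    have hv : v ≠ 0 := by rintro rfl; exact Nat.not_lt_zero _ hq
    obtain ⟨m, rfl⟩ := Nat.exists_eq_succ_of_ne_zero hv
    exact ⟨m, Nat.lt_succ_self m, hq⟩

lemma monotone_blockIndex (hd : degOf e = d) : Monotone (blockIndex hd) := fun q q' h =>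
  not_lt.1 fun hlt => lt_irrefl (blockIndex hd q) ((blockIndex_lt_iff hd q _).2
    ((show (q : ℕ) ≤ q' from h).trans_lt ((blockIndex_lt_iff hd q' _).1 hlt)))

lemma fiber_card_blockIndex (hd : degOf e = d) (s : ℕ) :
    e s = (univ.filter fun i => blockIndex hd i = s).card := by
  have hle := fun v => (partialSum_le_degOf e v).trans_eq hd
  have hsplit : (univ.filter fun i => blockIndex hd i = s) =
      (univ.filter fun i : Fin d => (i : ℕ) < partialSum e (s + 1)) \
        (univ.filter fun i : Fin d => (i : ℕ) < partialSum e s) := by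
    ext q
    simp only [mem_filter, mem_univ, true_and, mem_sdiff, ← blockIndex_lt_iff hd]
    omega
  have hsub : (univ.filter fun i : Fin d => (i : ℕ) < partialSum e s) ⊆
      univ.filter fun i : Fin d => (i : ℕ) < partialSum e (s + 1) := fun q hq => by
    simp only [mem_filter, mem_univ, true_and] at hq ⊢
    exact hq.trans_le (partialSum_mono e (Nat.le_succ s))
  rw [hsplit, card_sdiff_of_subset hsub, card_filter_val_lt (hle _), card_filter_val_lt (hle _),
    partialSum_succ]
  omega

lemma blockIndex_lt_of_mem {D : Finset ℕ} (hd : degOf e = d)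
    (hD : ∀ p ∈ D, p < d → p ∈ Set.range (partialSum e)) {a b : Fin d}
    (hab : (a : ℕ) + 1 = b) (hb : (b : ℕ) ∈ D) : blockIndex hd a < blockIndex hd b := by
  obtain ⟨v, hv⟩ := hD b hb b.isLt
  have ha := (blockIndex_lt_iff hd a v).2 (by omega)
  have hb := (blockIndex_lt_iff hd b v).not.2 (by omega)
  omega

open Classical in
lemma coeff_Fqs (d : ℕ) (D : Finset ℕ) (e : ℕ →₀ ℕ) :
    MvPowerSeries.coeff e (Fqs d D) =
      if degOf e = d ∧ ∀ p ∈ D, p < d → p ∈ Set.range (partialSum e) then 1 else 0 := by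
  change (Nat.card {j : Fin d → ℕ // Monotone j ∧
    (∀ a b : Fin d, (a : ℕ) + 1 = (b : ℕ) → (a : ℕ) + 1 ∈ D → j a < j b) ∧
    ∀ s : ℕ, e s = (univ.filter fun i => j i = s).card} : ℚ) = _
  split_ifs with h
  · obtain ⟨hd, hD⟩ := h
    rw [Nat.card_eq_one_iff_exists.2 ⟨⟨blockIndex hd, monotone_blockIndex hd,
      fun a b hab ha => blockIndex_lt_of_mem hd hD hab (hab ▸ ha), fiber_card_blockIndex hd⟩, ?_⟩,
      Nat.cast_one]
    rintro ⟨j, hmono, -, hfib⟩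
    exact Subtype.ext (eq_of_monotone_of_fiber_card hmono (monotone_blockIndex hd) hfib
      (fiber_card_blockIndex hd))
  · rw [Nat.card_eq_zero.2 (Or.inl ?_), Nat.cast_zero]
    refine ⟨fun ⟨j, hmono, hstrict, hfib⟩ => h ⟨degOf_eq_of_fiber_card hfib, fun p hp hpd => ?_⟩⟩
    rcases Nat.eq_zero_or_pos p with rfl | hp0
    · exact ⟨0, rfl⟩
    · exact mem_range_partialSum_of_fiber_card hmono hfib (a := ⟨p - 1, by omega⟩)
        (b := ⟨p, hpd⟩) (by simp; omega)
        (hstrict _ _ (by simp; omega) (by simpa [Nat.sub_add_cancel hp0]))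

end Fqs

section ExpOf

lemma expOf_apply (l : List ℕ) (i : ℕ) : expOf l i = l.getD i 0 := rfl

lemma partialSum_expOf (l : List ℕ) (k : ℕ) : partialSum (expOf l) k = (l.take k).sum := by
  induction k with
  | zero => rfl
  | succ k ih =>
    rw [partialSum_succ, ih, expOf_apply]
    by_cases h : k < l.length
    · rw [List.sum_take_succ l k h, List.getD_eq_getElem l 0 h]
    · rw [List.getD_eq_default l 0 (by omega), List.take_of_length_le (by omega),
        List.take_of_length_le (by omega), add_zero]

lemma degOf_expOf (l : List ℕ) : degOf (expOf l) = l.sum := by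
  obtain ⟨N, hN⟩ := exists_partialSum_eq_degOf (expOf l)
  rw [← hN (max N l.length) (le_max_left _ _), partialSum_expOf,
    List.take_of_length_le (le_max_right _ _)]

lemma expOf_append_of_lt {γ : List ℕ} (τ : List ℕ) {j : ℕ} (h : j < γ.length) :
    expOf (γ ++ τ) j = expOf γ j :=
  List.getD_append _ _ _ _ h

lemma expOf_ne_zero_of_zero_not_mem_drop {l : List ℕ} {i z : ℕ} (h : 0 ∉ l.drop i)
    (hiz : i ≤ z) (hz : z < l.length) : expOf l z ≠ 0 := by
  rw [expOf_apply, List.getD_eq_getElem l 0 hz]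
  rintro h0
  refine h (List.mem_drop_iff_getElem.2 ⟨z - i, by omega, ?_⟩)
  rw [← h0]
  congr 1
  omega

lemma expOf_append_pred (γ : List ℕ) (a : ℕ) (β : List ℕ) :
    expOf (γ ++ (a - 1) :: β) = expOf (γ ++ a :: β) - Finsupp.single γ.length 1 := by
  ext j
  simp only [Finsupp.coe_tsub, Pi.sub_apply, expOf_apply, Finsupp.single_apply]
  rcases lt_trichotomy j γ.length with h | rfl | h
  · rw [if_neg h.ne', List.getD_append _ _ _ _ h, List.getD_append _ _ _ _ h, Nat.sub_zero]
  · simp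
  · rw [if_neg h.ne, List.getD_append_right _ _ _ _ h.le, List.getD_append_right _ _ _ _ h.le]
    obtain ⟨k, hk⟩ : ∃ k, j - γ.length = k + 1 := ⟨j - γ.length - 1, by omega⟩
    simp [hk]

lemma range_partialSum_expOf_append_zero (γ τ : List ℕ) :
    Set.range (partialSum (expOf (γ ++ 0 :: τ))) = Set.range (partialSum (expOf (γ ++ τ))) := by
  have hlow : ∀ k ≤ γ.length, ((γ ++ 0 :: τ).take k).sum = ((γ ++ τ).take k).sum := by
    intro k hk
    rw [List.take_append_of_le_length hk, List.take_append_of_le_length hk]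
  have hhigh : ∀ j, ((γ ++ 0 :: τ).take (γ.length + 1 + j)).sum =
      ((γ ++ τ).take (γ.length + j)).sum := by
    intro j
    rw [add_assoc, List.take_length_add_append, List.take_length_add_append, add_comm]
    simp
  ext n
  simp only [Set.mem_range, partialSum_expOf]
  constructor
  · rintro ⟨k, rfl⟩
    by_cases hk : k ≤ γ.length
    · exact ⟨k, (hlow k hk).symm⟩
    · obtain ⟨j, rfl⟩ : ∃ j, k = γ.length + 1 + j := ⟨k - γ.length - 1, by omega⟩
      exact ⟨γ.length + j, (hhigh j).symm⟩
  · rintro ⟨k, rfl⟩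
    by_cases hk : k ≤ γ.length
    · exact ⟨k, hlow k hk⟩
    · obtain ⟨j, rfl⟩ : ∃ j, k = γ.length + j := ⟨k - γ.length, by omega⟩
      exact ⟨γ.length + 1 + j, hhigh j⟩

lemma zero_not_mem_drop_append {γ τ : List ℕ} (h0 : 0 ∉ τ) {i : ℕ} (hi : γ.length ≤ i) :
    0 ∉ (γ ++ τ).drop i := by
  rw [List.drop_append, List.drop_eq_nil_of_le hi, List.nil_append]
  exact fun h => h0 (List.mem_of_mem_drop h)

lemma zero_not_mem_drop_append_cons {γ τ : List ℕ} (c : ℕ) (h0 : 0 ∉ τ) {i : ℕ}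
    (hi : γ.length < i) : 0 ∉ (γ ++ c :: τ).drop i := by
  rw [List.append_cons]
  exact zero_not_mem_drop_append h0 (by simpa using hi)

lemma vanishes_of_agree {e : ℕ →₀ ℕ} {l : List ℕ} {i : ℕ} (hagree : ∀ j < i, e j = expOf l j)
    (h0 : 0 ∉ l.drop i) : ∀ z < l.length, expOf l z = 0 → e z = 0 := fun z hz hz0 => by
  by_cases hzi : z < i
  · rw [hagree z hzi, hz0]
  · exact absurd hz0 (expOf_ne_zero_of_zero_not_mem_drop h0 (not_lt.1 hzi) hz)

lemma refines_expOf_append_zero_cons_iff {e : ℕ →₀ ℕ} (γ τ : List ℕ) :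
    Refines e (expOf (γ ++ 0 :: τ)) ↔ Refines e (expOf (γ ++ τ)) := by
  simp only [Refines, degOf_expOf, range_partialSum_expOf_append_zero, List.sum_append,
    List.sum_cons, zero_add]

lemma not_refines_of_agree_of_lt {e : ℕ →₀ ℕ} {l : List ℕ} {i : ℕ}
    (hagree : ∀ j < i, e j = expOf l j) (hlt : expOf l i < e i) (h0 : 0 ∉ l.drop i) :
    ¬ Refines e (expOf l) := by
  rintro ⟨hd, hsub⟩
  have hi := partialSum_congr hagree
  have he := partialSum_succ e i
  have hl := partialSum_succ (expOf l) i
  by_cases hil : i < l.length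
  · -- the partial sum of `l` up to `i + 1` falls strictly inside the jump of `e` at `i`
    have hpos := expOf_ne_zero_of_zero_not_mem_drop h0 le_rfl hil
    obtain ⟨v, hv⟩ := hsub ⟨i + 1, rfl⟩
    rcases le_or_gt v i with hvi | hvi
    · have := partialSum_mono e hvi
      omega
    · have := partialSum_mono e (show i + 1 ≤ v by omega)
      omega
  · have hdeg : partialSum (expOf l) i = degOf (expOf l) := by
      rw [partialSum_expOf, List.take_of_length_le (not_lt.1 hil), degOf_expOf]
    have := partialSum_le_degOf e (i + 1)
    omega

open Classical in
lemma coeff_Fqs_descents (l : List ℕ) (e : ℕ →₀ ℕ) :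
    MvPowerSeries.coeff e (Fqs l.sum (descents l)) = if Refines e (expOf l) then 1 else 0 := by
  rw [coeff_Fqs]
  refine if_congr ?_ rfl rfl
  rw [Refines, degOf_expOf]
  refine and_congr_right fun hd => ⟨fun hD => ?_, fun hsub p hp _ => ?_⟩
  · rintro _ ⟨k, rfl⟩
    have hle := partialSum_le_degOf (expOf l) k
    rw [degOf_expOf] at hle
    rw [partialSum_expOf] at hle ⊢
    rcases hle.lt_or_eq with hlt | heq
    · rcases Nat.eq_zero_or_pos k with rfl | hk
      · exact ⟨0, rfl⟩
      have hkl : k < l.length := lt_of_not_ge fun h => by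
        rw [List.take_of_length_le h] at hlt; exact lt_irrefl _ hlt
      exact hD _ (mem_image.2 ⟨k, mem_Ioo.2 ⟨hk, hkl⟩, rfl⟩) hlt
    · obtain ⟨N, hN⟩ := exists_partialSum_eq_degOf e
      exact ⟨N, by rw [hN N le_rfl, hd, heq]⟩
  · obtain ⟨k, -, rfl⟩ := mem_image.1 hp
    exact hsub ⟨k, partialSum_expOf l k⟩

end ExpOf

section Strip

lemma strip_append_singleton (L : List ℕ) (a : ℕ) :
    strip (L ++ [a]) = if a = 0 then strip L else L ++ [a] := by
  by_cases ha : a = 0 <;> simp [strip, ha]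

lemma expOf_append_zero (L : List ℕ) : expOf (L ++ [0]) = expOf L := by
  ext i
  rw [expOf_apply, expOf_apply]
  rcases lt_or_ge i L.length with h | h
  · exact List.getD_append _ _ _ _ h
  · rw [List.getD_append_right _ _ _ _ h, List.getD_eq_default L 0 h]
    cases i - L.length <;> rfl

lemma expOf_strip (l : List ℕ) : expOf (strip l) = expOf l := by
  induction l using List.reverseRecOn with
  | nil => rfl
  | append_singleton L a ih =>
    rw [strip_append_singleton]
    split_ifs with ha
    · rw [ih, ha, expOf_append_zero]
    · rfl

lemma strip_length_le (l : List ℕ) : (strip l).length ≤ l.length := by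
  induction l using List.reverseRecOn with
  | nil => rfl
  | append_singleton L a ih =>
    rw [strip_append_singleton]
    split_ifs
    · simp only [List.length_append]; omega
    · rfl

lemma strip_strip (l : List ℕ) : strip (strip l) = strip l := by
  induction l using List.reverseRecOn with
  | nil => rfl
  | append_singleton L a ih =>
    rw [strip_append_singleton]
    split_ifs with ha
    · exact ih
    · rw [strip_append_singleton, if_neg ha]

lemma strip_ne_append_zero (l γ : List ℕ) : strip l ≠ γ ++ [0] := by
  induction l using List.reverseRecOn with
  | nil => simp [strip]
  | append_singleton L a ih =>
    rw [strip_append_singleton]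
    split_ifs with ha
    · exact ih
    · exact fun h => ha (by simpa using (List.append_inj' h rfl).2)

lemma strip_append_of_zero_not_mem (γ : List ℕ) {τ : List ℕ} (hτ : τ ≠ []) (h0 : 0 ∉ τ) :
    strip (γ ++ τ) = γ ++ τ := by
  obtain ⟨t, a, rfl⟩ := (List.eq_nil_or_concat τ).resolve_left hτ
  rw [List.concat_eq_append, ← List.append_assoc, strip_append_singleton, if_neg]
  rintro rfl
  exact h0 (by simp)

lemma strip_of_zero_not_mem {l : List ℕ} (h0 : 0 ∉ l) : strip l = l := by
  rcases eq_or_ne l [] with rfl | hl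
  · rfl
  · simpa using strip_append_of_zero_not_mem [] hl h0

lemma exists_eq_append_zero_cons {L : List ℕ} (h : 0 ∈ L) :
    ∃ γ τ, L = γ ++ 0 :: τ ∧ 0 ∉ τ := by
  induction L with
  | nil => simp at h
  | cons x L ih =>
    by_cases hL : 0 ∈ L
    · obtain ⟨γ, τ, rfl, hτ⟩ := ih hL
      exact ⟨x :: γ, τ, rfl, hτ⟩
    · obtain rfl : x = 0 := by simpa [hL, eq_comm] using h
      exact ⟨[], L, rfl, hL⟩

lemma exists_strip_eq_append_zero_cons {l : List ℕ} (h : 0 ∈ strip l) :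
    ∃ γ a β, strip l = γ ++ 0 :: a :: β ∧ 0 ∉ a :: β := by
  obtain ⟨γ, τ, hl, hτ⟩ := exists_eq_append_zero_cons h
  cases τ with
  | nil => exact absurd hl (strip_ne_append_zero l γ)
  | cons a β => exact ⟨γ, a, β, hl, hτ⟩

end Strip

section Recursion

lemma Gaux_succ_of_zero_not_mem (n : ℕ) {l : List ℕ} (h : 0 ∉ strip l) :
    Gaux (n + 1) l = Fqs (strip l).sum (descents (strip l)) := by
  simp only [Gaux, h, if_false]

lemma Gaux_succ_of_strip_eq {n : ℕ} {l γ : List ℕ} {a : ℕ} {β : List ℕ}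
    (hs : strip l = γ ++ 0 :: a :: β) (h0 : 0 ∉ a :: β) :
    Gaux (n + 1) l = Gaux n (γ ++ a :: β) -
      MvPowerSeries.X γ.length * Gaux n (γ ++ (a - 1) :: β) := by
  have hτ : ∀ x ∈ (a :: β).reverse, (x != 0) = true := fun x hx => by
    simpa using fun hx0 : x = 0 => h0 (hx0 ▸ List.mem_reverse.1 hx)
  have hrev : (strip l).reverse = (a :: β).reverse ++ 0 :: γ.reverse := by simp [hs]
  have hmem : 0 ∈ strip l := by simp [hs]
  have htake : ((strip l).reverse.takeWhile (· != 0)).reverse = a :: β := by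
    rw [hrev, List.takeWhile_append_of_pos hτ]
    simp
  have hdrop : ((strip l).reverse.dropWhile (· != 0)).tail.reverse = γ := by
    rw [hrev, List.dropWhile_append_of_pos hτ]
    simp
  simp only [Gaux, hmem, if_true, htake, hdrop, List.headI_cons, List.tail_cons]

lemma Gaux_eq_Gaux (n : ℕ) : ∀ m l, (strip l).length ≤ n → (strip l).length ≤ m →
    Gaux n l = Gaux m l := by
  induction n with
  | zero =>
    intro m l hn _
    have h0 : 0 ∉ strip l := by simp [List.length_eq_zero_iff.1 (Nat.le_zero.1 hn)]
    cases m with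
    | zero => rfl
    | succ m => rw [Gaux_succ_of_zero_not_mem m h0]; rfl
  | succ n ih =>
    intro m l hn hm
    by_cases h0 : 0 ∈ strip l
    · obtain ⟨γ, a, β, hs, hβ⟩ := exists_strip_eq_append_zero_cons h0
      have hlen := congrArg List.length hs
      have h1 := strip_length_le (γ ++ a :: β)
      have h2 := strip_length_le (γ ++ (a - 1) :: β)
      simp only [List.length_append, List.length_cons] at hlen h1 h2
      obtain ⟨m, rfl⟩ : ∃ m', m = m' + 1 := ⟨m - 1, by omega⟩
      rw [Gaux_succ_of_strip_eq hs hβ, Gaux_succ_of_strip_eq hs hβ,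
        ih m _ (by omega) (by omega), ih m _ (by omega) (by omega)]
    · cases m with
      | zero => rw [Gaux_succ_of_zero_not_mem n h0]; rfl
      | succ m => rw [Gaux_succ_of_zero_not_mem n h0, Gaux_succ_of_zero_not_mem m h0]

lemma Gaux_eq_G {n : ℕ} {l : List ℕ} (h : (strip l).length ≤ n) : Gaux n l = G l :=
  Gaux_eq_Gaux n _ l h le_rfl

lemma G_strip (l : List ℕ) : G (strip l) = G l := by
  rw [G, G, strip_strip]
  cases (strip l).length <;> simp only [Gaux, strip_strip]

lemma G_of_zero_not_mem {l : List ℕ} (h0 : 0 ∉ l) : G l = Fqs l.sum (descents l) := by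
  have hs := strip_of_zero_not_mem h0
  rw [G]
  cases (strip l).length with
  | zero => simp only [Gaux, hs]
  | succ n => rw [Gaux_succ_of_zero_not_mem n (by rwa [hs]), hs]

lemma G_append_zero_cons (γ : List ℕ) {a : ℕ} {β : List ℕ} (h0 : 0 ∉ a :: β) :
    G (γ ++ 0 :: a :: β) =
      G (γ ++ a :: β) - MvPowerSeries.X γ.length * G (γ ++ (a - 1) :: β) := by
  have hs : strip (γ ++ 0 :: a :: β) = γ ++ 0 :: a :: β := by
    rw [List.append_cons]
    exact strip_append_of_zero_not_mem _ (List.cons_ne_nil a β) h0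
  have h1 := strip_length_le (γ ++ a :: β)
  have h2 := strip_length_le (γ ++ (a - 1) :: β)
  simp only [List.length_append, List.length_cons] at h1 h2
  rw [G, hs, show (γ ++ 0 :: a :: β).length = (γ.length + β.length + 1) + 1 by simp; omega,
    Gaux_succ_of_strip_eq hs h0, Gaux_eq_G (by omega), Gaux_eq_G (by omega)]

lemma G_append_zero (γ : List ℕ) : G (γ ++ [0]) = G γ := by
  rw [← G_strip, strip_append_singleton, if_pos rfl, G_strip]

theorem G_induction {P : List ℕ → Prop} (of_strip : ∀ l, P (strip l) → P l)
    (of_zero_not_mem : ∀ l, 0 ∉ l → P l)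
    (append_zero_cons : ∀ γ a β, 0 ∉ a :: β → P (γ ++ a :: β) → P (γ ++ (a - 1) :: β) →
      P (γ ++ 0 :: a :: β))
    (l : List ℕ) : P l := by
  induction hn : l.length using Nat.strong_induction_on generalizing l with
  | _ n ih =>
    refine of_strip l ?_
    by_cases h0 : 0 ∈ strip l
    · obtain ⟨γ, a, β, hs, hβ⟩ := exists_strip_eq_append_zero_cons h0
      have hlen := (congrArg List.length hs).symm.trans_le (strip_length_le l)
      simp only [List.length_append, List.length_cons] at hlen
      rw [hs]
      exact append_zero_cons γ a β hβ (ih _ (by simp; omega) _ rfl) (ih _ (by simp; omega) _ rfl)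
    · exact of_zero_not_mem _ h0

end Recursion

lemma coeff_X_mul (p : ℕ) (φ : MvPowerSeries ℕ ℚ) (e : ℕ →₀ ℕ) :
    MvPowerSeries.coeff e (MvPowerSeries.X p * φ) =
      if 1 ≤ e p then MvPowerSeries.coeff (e - Finsupp.single p 1) φ else 0 := by
  rw [MvPowerSeries.X, MvPowerSeries.coeff_monomial_mul, one_mul]
  exact if_congr Finsupp.single_le_iff rfl rfl

open Classical in
theorem coeff_G_of_vanishes (l : List ℕ) (e : ℕ →₀ ℕ)
    (hvan : ∀ z < l.length, expOf l z = 0 → e z = 0) :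
    MvPowerSeries.coeff e (G l) = if Refines e (expOf l) then 1 else 0 := by
  induction l using G_induction generalizing e with
  | of_strip l ih =>
    rw [← G_strip, ih e fun z hz hz0 => hvan z (hz.trans_le (strip_length_le l))
      (expOf_strip l ▸ hz0), expOf_strip]
  | of_zero_not_mem l h0 => rw [G_of_zero_not_mem h0, coeff_Fqs_descents]
  | append_zero_cons γ a β h0 ih _ =>
    have hp : e γ.length = 0 := hvan _ (by simp) (by simp [expOf_apply])
    rw [G_append_zero_cons γ h0, map_sub, coeff_X_mul, if_neg (by omega), sub_zero,
      refines_expOf_append_zero_cons_iff, ih]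
    intro z hz hz0
    rcases lt_or_ge z γ.length with hzp | hzp
    · refine hvan z (by simp at hz ⊢; omega) ?_
      rwa [expOf_append_of_lt _ hzp] at hz0 ⊢
    · exact absurd hz0
        (expOf_ne_zero_of_zero_not_mem_drop (zero_not_mem_drop_append h0 le_rfl) hzp hz)

theorem degOf_eq_of_coeff_G_ne_zero (l : List ℕ) (e : ℕ →₀ ℕ)
    (he : MvPowerSeries.coeff e (G l) ≠ 0) : degOf e = l.sum := by
  induction l using G_induction generalizing e with
  | of_strip l ih =>
    rw [← degOf_expOf, ← expOf_strip, degOf_expOf]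
    exact ih e (by rwa [G_strip])
  | of_zero_not_mem l h0 =>
    rw [G_of_zero_not_mem h0, coeff_Fqs_descents] at he
    split_ifs at he with h
    · rw [h.1, degOf_expOf]
    · exact absurd rfl he
  | append_zero_cons γ a β h0 ih ih' =>
    have ha := List.ne_of_not_mem_cons h0
    rw [G_append_zero_cons γ h0, map_sub, coeff_X_mul] at he
    by_cases h1 : MvPowerSeries.coeff e (G (γ ++ a :: β)) = 0
    · rw [h1, zero_sub, neg_ne_zero] at he
      split_ifs at he with hp
      · have h1 := ih' _ he
        have h2 := degOf_sub_single hp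
        simp only [List.sum_append, List.sum_cons] at h1 ⊢
        omega
      · exact absurd rfl he
    · simpa using ih e h1

lemma coeff_G_eq_zero_of_agree_of_lt_of_zero_not_mem_drop {e : ℕ →₀ ℕ} {l : List ℕ} {i : ℕ}
    (hagree : ∀ j < i, e j = expOf l j) (hlt : expOf l i < e i) (h0 : 0 ∉ l.drop i) :
    MvPowerSeries.coeff e (G l) = 0 := by
  classical
  rw [coeff_G_of_vanishes l e (vanishes_of_agree hagree h0),
    if_neg (not_refines_of_agree_of_lt hagree hlt h0)]

lemma coeff_G_append_cons_of_two_le_or_eq_one (γ : List ℕ) {a : ℕ} {β : List ℕ} {e : ℕ →₀ ℕ}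
    (h0 : 0 ∉ a :: β) (hagree : ∀ j < γ.length, e j = expOf γ j) (he : 1 ≤ e γ.length)
    (hjump : 2 ≤ a ∨ e γ.length = 1) :
    MvPowerSeries.coeff e (G (γ ++ a :: β)) =
      MvPowerSeries.coeff (e - Finsupp.single γ.length 1) (G (γ ++ (a - 1) :: β)) := by
  classical
  have hagree' : ∀ j < γ.length, e j = expOf (γ ++ a :: β) j := fun j hj => by
    rw [hagree j hj, expOf_append_of_lt _ hj]
  have ha : 1 ≤ a := Nat.one_le_iff_ne_zero.2 (List.ne_of_not_mem_cons h0).symm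
  have hvan : ∀ z < (γ ++ (a - 1) :: β).length, expOf (γ ++ (a - 1) :: β) z = 0 →
      (e - Finsupp.single γ.length 1 : ℕ →₀ ℕ) z = 0 := by
    intro z hz hz0
    rcases lt_trichotomy z γ.length with hzp | rfl | hzp
    · rw [sub_single_apply_of_lt hzp, hagree z hzp, ← hz0, expOf_append_of_lt _ hzp]
    · have : a - 1 = 0 := by simpa [expOf_apply] using hz0
      simp only [Finsupp.coe_tsub, Pi.sub_apply, Finsupp.single_eq_same]
      omega
    · exact absurd hz0 (expOf_ne_zero_of_zero_not_mem_drop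
        (zero_not_mem_drop_append_cons _ (List.not_mem_of_not_mem_cons h0) (Nat.lt_succ_self _))
        hzp hz)
  rw [coeff_G_of_vanishes _ e (vanishes_of_agree hagree'
      (zero_not_mem_drop_append h0 le_rfl)), coeff_G_of_vanishes _ _ hvan, expOf_append_pred,
    refines_sub_single_iff hagree' he (by simpa [expOf_apply] using ha)
      (by simpa [expOf_apply] using hjump)]

lemma coeff_G_append_one_cons_eq_zero (γ : List ℕ) {β : List ℕ} {e : ℕ →₀ ℕ} (h0 : 0 ∉ β)
    (hagree : ∀ j < γ.length, e j = expOf γ j) (he : 2 ≤ e γ.length) :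
    MvPowerSeries.coeff e (G (γ ++ 1 :: β)) = 0 :=
  coeff_G_eq_zero_of_agree_of_lt_of_zero_not_mem_drop
    (fun j hj => by rw [hagree j hj, expOf_append_of_lt _ hj]) (by simp [expOf_apply]; omega)
    (zero_not_mem_drop_append (by simpa using h0) le_rfl)

theorem coeff_G_append_cons (γ : List ℕ) (a : ℕ) (β : List ℕ) (e : ℕ →₀ ℕ)
    (h0 : 0 ∉ a :: β) (hagree : ∀ j < γ.length, e j = expOf γ j) (he : 1 ≤ e γ.length) :
    MvPowerSeries.coeff e (G (γ ++ a :: β)) =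
      MvPowerSeries.coeff (e - Finsupp.single γ.length 1) (G (γ ++ (a - 1) :: β)) := by
  have hagree_sub : ∀ j < γ.length, (e - Finsupp.single γ.length 1 : ℕ →₀ ℕ) j = expOf γ j :=
    fun j hj => by rw [sub_single_apply_of_lt hj, hagree j hj]
  have ha := List.ne_of_not_mem_cons h0
  have hβ := List.not_mem_of_not_mem_cons h0
  by_cases hjump : 2 ≤ a ∨ e γ.length = 1
  · exact coeff_G_append_cons_of_two_le_or_eq_one γ h0 hagree he hjump
  -- otherwise `a = 1 < e γ.length`, and both sides vanish
  obtain ⟨rfl, he2⟩ : a = 1 ∧ 2 ≤ e γ.length := by omega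
  rw [coeff_G_append_one_cons_eq_zero γ hβ hagree he2, Nat.sub_self]
  cases β with
  | nil =>
    rw [G_append_zero, coeff_G_eq_zero_of_agree_of_lt_of_zero_not_mem_drop hagree_sub
      (by simp [expOf_apply]; omega) (by simp)]
  | cons b β =>
    rw [G_append_zero_cons γ hβ, map_sub, coeff_X_mul, if_pos (by simp; omega),
      coeff_G_append_cons γ b β _ hβ hagree_sub (by simp; omega), sub_self]
termination_by β.length

theorem coeff_G_eq_zero_of_agree_of_lt (l : List ℕ) (e : ℕ →₀ ℕ) (i : ℕ)
    (hagree : ∀ j < i, e j = expOf l j) (hlt : expOf l i < e i) :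
    MvPowerSeries.coeff e (G l) = 0 := by
  induction l using G_induction generalizing e i with
  | of_strip l ih =>
    rw [← G_strip]
    exact ih e i (by rwa [expOf_strip]) (by rwa [expOf_strip])
  | of_zero_not_mem l h0 =>
    exact coeff_G_eq_zero_of_agree_of_lt_of_zero_not_mem_drop hagree hlt
      fun h => h0 (List.mem_of_mem_drop h)
  | append_zero_cons γ a β h0 ih ih' =>
    have hγ : ∀ {τ : List ℕ} {j : ℕ}, j < γ.length →
        expOf (γ ++ 0 :: a :: β) j = expOf (γ ++ τ) j := fun hj => by
      rw [expOf_append_of_lt _ hj, expOf_append_of_lt _ hj]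
    rcases lt_trichotomy i γ.length with hi | rfl | hi
    · rw [G_append_zero_cons γ h0, map_sub, coeff_X_mul,
        ih e i (fun j hj => (hagree j hj).trans (hγ (hj.trans hi))) (hγ hi ▸ hlt), zero_sub,
        neg_eq_zero, ite_eq_right_iff]
      refine fun _ => ih' _ i (fun j hj => ?_) ?_
      · rw [sub_single_apply_of_lt (hj.trans hi), hagree j hj, hγ (hj.trans hi)]
      · rwa [sub_single_apply_of_lt hi, ← hγ hi]
    · have he : 1 ≤ e γ.length := by simp [expOf_apply] at hlt; omega
      rw [G_append_zero_cons γ h0, map_sub, coeff_X_mul, if_pos he,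
        coeff_G_append_cons γ a β e h0 (fun j hj => by rw [hagree j hj, expOf_append_of_lt _ hj])
          he, sub_self]
    · exact coeff_G_eq_zero_of_agree_of_lt_of_zero_not_mem_drop hagree hlt
        (zero_not_mem_drop_append_cons 0 h0 hi)

lemma Finsupp.exists_first_ne {f g : ℕ →₀ ℕ} (h : f ≠ g) :
    ∃ i, f i ≠ g i ∧ ∀ j < i, f j = g j := by
  classical
  have hex : ∃ i, f i ≠ g i := by
    by_contra! hc
    exact h (Finsupp.ext hc)
  exact ⟨Nat.find hex, Nat.find_spec hex, fun j hj => not_not.1 (Nat.find_min hex hj)⟩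

/-- For every generalized composition `α̃`, the leading monomial of `G_{α̃}` with
respect to `≤_lex` is `X^{α̃}`, with leading coefficient `1`: the coefficient of
`X^{α̃}` in `G_{α̃}` is `1`, and every other monomial with nonzero coefficient is
strictly `≤_lex`-smaller than `X^{α̃}`. -/
theorem G_leadingMonomial (l : List ℕ) :
    MvPowerSeries.coeff (expOf l) (G l) = 1 ∧
    ∀ β : ℕ →₀ ℕ, β ≠ expOf l → MvPowerSeries.coeff β (G l) ≠ 0 →
      lexLE β (expOf l) := by
  classical
  refine ⟨?_, fun β hne hβ => ?_⟩
  · rw [coeff_G_of_vanishes l _ fun _ _ h => h, if_pos ⟨rfl, subset_rfl⟩]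
  · obtain ⟨i, hi, hagree⟩ := Finsupp.exists_first_ne hne
    have hlt : β i < expOf l i := hi.lt_or_gt.resolve_right fun hgt =>
      hβ (coeff_G_eq_zero_of_agree_of_lt l β i hagree hgt)
    exact Or.inr ⟨(degOf_eq_of_coeff_G_ne_zero l β hβ).trans (degOf_expOf l).symm,
      Or.inr ⟨i, hlt, hagree⟩⟩
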